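/- The sequences (x^k) and (z^k) generated by the BP-MAP algorithm are bounded subsets of ℝⁿ. -/

import Mathlib

open Filter Topology

/-- The ℓ¹-norm on ℝⁿ. -/
noncomputable def norm1 {n : ℕ} (x : EuclideanSpace ℝ (Fin n)) : ℝ := ∑ i, |x i|

lemma norm1_nonneg {n : ℕ} (v : EuclideanSpace ℝ (Fin n)) : 0 ≤ norm1 v :=
  Finset.sum_nonneg fun _ _ => abs_nonneg _

lemma norm_le_norm1 {n : ℕ} (v : EuclideanSpace ℝ (Fin n)) : ‖v‖ ≤ norm1 v := by
  rw [EuclideanSpace.norm_eq]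
  simp_rw [Real.norm_eq_abs]
  have hS : ∀ i ∈ Finset.univ, |v i| ≤ norm1 v := fun i _ =>
    Finset.single_le_sum (fun j _ => abs_nonneg (v j)) (Finset.mem_univ i)
  have h : ∑ i, |v i| ^ 2 ≤ (norm1 v) ^ 2 := by
    calc ∑ i, |v i| ^ 2 = ∑ i, |v i| * |v i| := by
          simp [sq]
      _ ≤ ∑ i, |v i| * norm1 v := Finset.sum_le_sum fun i hi =>
          mul_le_mul_of_nonneg_left (hS i hi) (abs_nonneg _)
      _ = norm1 v * norm1 v := by rw [← Finset.sum_mul]; rfl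
      _ = norm1 v ^ 2 := (sq (norm1 v)).symm
  calc Real.sqrt (∑ i, |v i| ^ 2) ≤ Real.sqrt ((norm1 v) ^ 2) := Real.sqrt_le_sqrt h
    _ = norm1 v := Real.sqrt_sq (norm1_nonneg v)

/-- The sequences (x^k) and (z^k) generated by BP-MAP are bounded. -/
theorem bpmap_sequences_bounded {n m : ℕ} (hn : 1 ≤ n)
    (A : Matrix (Fin m) (Fin n) ℝ) (b : Fin m → ℝ)
    (M : Set (EuclideanSpace ℝ (Fin n)))
    (hM : M = {x | A.mulVec x.ofLp = b})
    (hMne : M.Nonempty)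
    (rbar : ℝ) (hrbar : rbar = sInf (norm1 '' M))
    (r : ℕ → ℝ) (z x : ℕ → EuclideanSpace ℝ (Fin n))
    (hr0 : r 0 = 0) (hz0 : z 0 = 0)
    (hxM : ∀ k, x k ∈ M)
    (hzB : ∀ k, norm1 (z k) ≤ r k)
    (hbap : ∀ k, ∀ y ∈ M, ∀ w : EuclideanSpace ℝ (Fin n),
      norm1 w ≤ r k → dist (z k) (x k) ≤ dist w y)
    (hrrec : ∀ k, r (k + 1) = r k + dist (z k) (x k)) :
    Bornology.IsBounded (Set.range x) ∧ Bornology.IsBounded (Set.range z) := by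
  obtain ⟨xs, hxs⟩ := hMne
  set R := norm1 xs with hRdef
  have hR0 : 0 ≤ R := norm1_nonneg xs
  have hxs2 : ‖xs‖ ≤ R := norm_le_norm1 xs
  -- key: 0 ≤ r k ≤ R
  have hrk : ∀ k, 0 ≤ r k ∧ r k ≤ R := by
    intro k
    induction k with
    | zero => exact ⟨le_of_eq hr0.symm, hr0 ▸ hR0⟩
    | succ k ih =>
      obtain ⟨h0, hle⟩ := ih
      have hd0 : (0:ℝ) ≤ dist (z k) (x k) := dist_nonneg
      refine ⟨by rw [hrrec]; linarith, ?_⟩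
      rw [hrrec]
      by_cases hcase : R ≤ r k
      · have hd : dist (z k) (x k) ≤ dist xs xs := hbap k xs hxs xs hcase
        rw [dist_self] at hd
        linarith
      · push_neg at hcase
        have hRpos : 0 < R := lt_of_le_of_lt h0 hcase
        set c := r k / R with hc
        have hc0 : 0 ≤ c := div_nonneg h0 hR0
        have hc1 : c ≤ 1 := (div_le_one hRpos).mpr (le_of_lt hcase)
        have hcR : c * R = r k := div_mul_cancel₀ _ (ne_of_gt hRpos)
        have hw1 : norm1 (c • xs) = r k := by
          unfold norm1
          have : ∀ i, |(c • xs) i| = c * |xs i| := by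
            intro i
            simp [PiLp.smul_apply, abs_mul, abs_of_nonneg hc0]
          simp_rw [this]
          rw [← Finset.mul_sum]
          exact hcR
        have hd : dist (z k) (x k) ≤ dist (c • xs) xs :=
          hbap k xs hxs (c • xs) (le_of_eq hw1)
        have hdist : dist (c • xs) xs = (1 - c) * ‖xs‖ := by
          rw [dist_eq_norm, show c • xs - xs = (c - 1) • xs by
            rw [sub_smul, one_smul], norm_smul, Real.norm_eq_abs,
            abs_of_nonpos (by linarith)]
          ring
        have hfin : (1 - c) * ‖xs‖ ≤ (1 - c) * R :=
          mul_le_mul_of_nonneg_left hxs2 (by linarith)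
        have : (1 - c) * R = R - r k := by rw [sub_mul, one_mul, hcR]
        linarith [hd.trans (hdist ▸ hfin)]
  -- bound z
  have hz : ∀ k, ‖z k‖ ≤ R := fun k =>
    (norm_le_norm1 (z k)).trans ((hzB k).trans (hrk k).2)
  -- bound d
  have hd : ∀ k, dist (z k) (x k) ≤ 2 * R := by
    intro k
    have h1 : dist (z k) (x k) ≤ dist (z k) xs := hbap k xs hxs (z k) (hzB k)
    have h2 : dist (z k) xs ≤ ‖z k‖ + ‖xs‖ := by
      rw [dist_eq_norm]; exact norm_sub_le _ _
    linarith [hz k]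
  -- bound x
  have hx : ∀ k, ‖x k‖ ≤ 3 * R := by
    intro k
    have : ‖x k‖ ≤ ‖z k‖ + ‖z k - x k‖ := by
      calc ‖x k‖ = ‖z k - (z k - x k)‖ := by rw [sub_sub_cancel]
        _ ≤ ‖z k‖ + ‖z k - x k‖ := norm_sub_le _ _
    rw [← dist_eq_norm] at this
    linarith [hz k, hd k]
  constructor
  · refine (Metric.isBounded_closedBall (x := (0 : EuclideanSpace ℝ (Fin n)))
      (r := 3 * R)).subset ?_
    rintro _ ⟨k, rfl⟩
    rw [Metric.mem_closedBall, dist_zero_right]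
    exact hx k
  · refine (Metric.isBounded_closedBall (x := (0 : EuclideanSpace ℝ (Fin n)))
      (r := R)).subset ?_
    rintro _ ⟨k, rfl⟩
    rw [Metric.mem_closedBall, dist_zero_right]
    exact hz k
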